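/- Let A be a finite abelian group with a nondegenerate quadratic function q, and let (B,β) be a Schellekens pair for (A,q). Consider the maps j : B → B̂ × A, j(b) = (β(−,b)⁻¹, b), and π : B̂ × A → Γ̂, where Γ = Γ(B,β) and π(χ,a) is the character of Γ given by (u,v) ↦ σ(u,a)·χ(uv) (note that uv ∈ B for (u,v) ∈ Γ, so this is well defined). Then j is an injective group homomorphism, π is a surjective group homomorphism, and the image of j equals the kernel of π; that is, B → B̂ × A → Γ̂ is a short exact sequence. (Here Ĥ = Hom(H,ℂˣ) denotes the dual group of a finite abelian group H.) -/

import Mathlib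

/-- The bicharacter `σ(a,b) = q(ab) q(a)⁻¹ q(b)⁻¹` associated to `q`. -/
def qSigma {A : Type*} [CommGroup A] (q : A → ℂˣ) (a b : A) : ℂˣ :=
  q (a * b) * (q a)⁻¹ * (q b)⁻¹

/-- `q` is a quadratic function: `q(a⁻¹) = q(a)` and the associated `σ` is
multiplicative in each argument. -/
def IsQuadratic {A : Type*} [CommGroup A] (q : A → ℂˣ) : Prop :=
  (∀ a : A, q a⁻¹ = q a) ∧
  (∀ a b c : A, qSigma q (a * b) c = qSigma q a c * qSigma q b c) ∧
  (∀ a b c : A, qSigma q a (b * c) = qSigma q a b * qSigma q a c)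

/-- `q` is nondegenerate: for every `a ≠ 1` the homomorphism `σ(a,−)` is nontrivial. -/
def IsNondeg {A : Type*} [CommGroup A] (q : A → ℂˣ) : Prop :=
  ∀ a : A, a ≠ 1 → ∃ b : A, qSigma q a b ≠ 1

/-- `(B, β)` is a Schellekens pair for `(A, q)`: `β` is symmetric, multiplicative
in each argument, and `β(b,b) = q(b)` on the subgroup `B`. -/
def IsSchellekens {A : Type*} [CommGroup A] (q : A → ℂˣ) (B : Subgroup A)
    (β : B → B → ℂˣ) : Prop :=
  (∀ b c : B, β b c = β c b) ∧
  (∀ b c d : B, β (b * c) d = β b d * β c d) ∧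
  (∀ b c d : B, β b (c * d) = β b c * β b d) ∧
  (∀ b : B, β b b = q (b : A))

/-- `Γ(B,β) = {(a, a⁻¹ b) | a ∈ A, b ∈ B, σ(c,a) = β(c,b) ∀ c ∈ B}` as a subset of `A × A`. -/
def GammaSet {A : Type*} [CommGroup A] (q : A → ℂˣ) (B : Subgroup A)
    (β : B → B → ℂˣ) : Set (A × A) :=
  {z | ∃ b : B, z.2 = z.1⁻¹ * (b : A) ∧ ∀ c : B, qSigma q (c : A) z.1 = β c b}

/-- The bicharacter `τ((a,b),(c,d)) = σ(a,c) σ(b,d)⁻¹` on `A × A`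
associated to the quadratic function `q × q⁻¹`. -/
def qTau {A : Type*} [CommGroup A] (q : A → ℂˣ) (z w : A × A) : ℂˣ :=
  qSigma q z.1 w.1 * (qSigma q z.2 w.2)⁻¹


/-!
Nondegeneracy makes `a ↦ σ(−,a)` an isomorphism `A ≃ Â`; with the extension of characters from
subgroups it follows that every character of `B` is `σ(−,u)|_B` and that `B^⊥⊥ = B`.
A character of `Γ` extends to `A × A`, where it has the form
`(u,v) ↦ σ(u,x) σ(v,y) = σ(u, xy⁻¹) σ(uv, y)`, so it is `π(σ(−,y)|_B, xy⁻¹)`. If `π(χ,a) = 1`,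
testing on the points `(u, u⁻¹) ∈ Γ` with `u ∈ B^⊥` puts `a` in `B^⊥⊥ = B`, and testing on
`(u, u⁻¹c)` with `σ(−,u)|_B = β(−,c)` gives `χ(c) = β(c,a)⁻¹`.
-/

section

open MonoidHom

variable {A : Type*} [CommGroup A] {q : A → ℂˣ}

lemma qSigma_comm (q : A → ℂˣ) (a b : A) : qSigma q a b = qSigma q b a := by
  unfold qSigma
  rw [mul_comm a b, mul_right_comm]

namespace IsQuadratic

def sigmaHom (hq : IsQuadratic q) : A →* A →* ℂˣ :=
  MonoidHom.mk' (fun a => MonoidHom.mk' (qSigma q a) (hq.2.2 a))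
    (fun a b => MonoidHom.ext (hq.2.1 a b))

lemma qSigma_inv_right (hq : IsQuadratic q) (a b : A) :
    qSigma q a b⁻¹ = (qSigma q a b)⁻¹ :=
  map_inv (hq.sigmaHom a) b

lemma sigmaHom_bijective [Finite A] (hq : IsQuadratic q) (hnd : IsNondeg q) :
    Function.Bijective hq.sigmaHom := by
  have hinj : Function.Injective hq.sigmaHom := by
    refine (injective_iff_map_eq_one _).mpr fun a ha => ?_
    by_contra hne
    obtain ⟨b, hb⟩ := hnd a hne
    exact hb (DFunLike.congr_fun ha b)
  refine hinj.bijective_of_nat_card_le ?_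
  rw [CommGroup.card_monoidHom_of_hasEnoughRootsOfUnity]

lemma exists_qSigma_eq [Finite A] (hq : IsQuadratic q) (hnd : IsNondeg q) (φ : A →* ℂˣ) :
    ∃ a, ∀ x, qSigma q x a = φ x := by
  obtain ⟨a, rfl⟩ := (hq.sigmaHom_bijective hnd).2 φ
  exact ⟨a, fun x => qSigma_comm q x a⟩

lemma exists_qSigma_eq_on_subgroup [Finite A] (hq : IsQuadratic q) (hnd : IsNondeg q)
    {B : Subgroup A} (ψ : B →* ℂˣ) : ∃ a, ∀ c : B, qSigma q c a = ψ c := by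
  obtain ⟨φ, rfl⟩ := MonoidHom.domRestrict_surjective ℂ B ψ
  obtain ⟨a, ha⟩ := hq.exists_qSigma_eq hnd φ
  exact ⟨a, fun c => ha c⟩

lemma mem_of_forall_qSigma_eq_one [Finite A] (hq : IsQuadratic q) (hnd : IsNondeg q)
    {B : Subgroup A} {a : A} (h : ∀ u, (∀ c ∈ B, qSigma q c u = 1) → qSigma q u a = 1) :
    a ∈ B := by
  rw [← CommGroup.forall_monoidHom_apply_eq_one_iff ℂ]
  intro φ hφ
  obtain ⟨u, hu⟩ := hq.exists_qSigma_eq hnd φ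
  rw [← hu, qSigma_comm]
  exact h u fun c hc => (hu c).trans (hφ c hc)

end IsQuadratic

namespace IsSchellekens

variable {B : Subgroup A} {β : B → B → ℂˣ}

def betaHom (hβ : IsSchellekens q B β) : B →* B →* ℂˣ :=
  MonoidHom.mk' (fun b => MonoidHom.mk' (β b) (hβ.2.2.1 b))
    (fun b c => MonoidHom.ext (hβ.2.1 b c))

/-- The paper's `j(b) = (β(−,b)⁻¹, b)`. -/
def dualProdHom (hβ : IsSchellekens q B β) : B →* (B →* ℂˣ) × A :=
  hβ.betaHom.flip⁻¹.prod B.subtype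

lemma dualProdHom_injective (hβ : IsSchellekens q B β) : Function.Injective hβ.dualProdHom :=
  fun _ _ h => Subtype.ext (congrArg Prod.snd h)

end IsSchellekens

section Gamma

variable {B : Subgroup A} {β : B → B → ℂˣ}

lemma mul_mem_of_mem_gammaSet {z : A × A} (hz : z ∈ GammaSet q B β) : z.1 * z.2 ∈ B := by
  obtain ⟨b, hb, -⟩ := hz
  rw [hb, mul_inv_cancel_left]
  exact b.2

lemma qSigma_eq_of_mem_gammaSet {z : A × A} (hz : z ∈ GammaSet q B β) (c : B) :
    qSigma q c z.1 = β c ⟨z.1 * z.2, mul_mem_of_mem_gammaSet hz⟩ := by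
  obtain ⟨b, hb, hσ⟩ := hz
  convert hσ c
  rw [hb, mul_inv_cancel_left]

lemma mk_mem_gammaSet {u : A} {b : B} (h : ∀ c : B, qSigma q c u = β c b) :
    (u, u⁻¹ * b) ∈ GammaSet q B β :=
  ⟨b, rfl, h⟩

variable {Γ : Subgroup (A × A)}

def gammaMul (hΓ : ∀ z ∈ Γ, z.1 * z.2 ∈ B) : Γ →* B :=
  (mulMonoidHom.comp Γ.subtype).codRestrict B fun z => hΓ z z.2

/-- The paper's `π(χ, a) = ((u, v) ↦ σ(u,a) χ(uv))`. -/
def gammaCharHom (hq : IsQuadratic q) (hΓ : ∀ z ∈ Γ, z.1 * z.2 ∈ B) :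
    (B →* ℂˣ) × A →* (Γ →* ℂˣ) :=
  (compHom' ((fst A A).comp Γ.subtype)).comp (hq.sigmaHom.flip.comp (snd _ A)) *
    (compHom' (gammaMul hΓ)).comp (fst _ A)

lemma gammaCharHom_apply (hq : IsQuadratic q) (hΓ : ∀ z ∈ Γ, z.1 * z.2 ∈ B)
    (χ : B →* ℂˣ) (a : A) (z : Γ) :
    gammaCharHom hq hΓ (χ, a) z = qSigma q (z : A × A).1 a * χ (gammaMul hΓ z) := rfl

lemma gammaCharHom_surjective [Finite A] (hq : IsQuadratic q) (hnd : IsNondeg q)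
    (hΓ : ∀ z ∈ Γ, z.1 * z.2 ∈ B) : Function.Surjective (gammaCharHom hq hΓ) := by
  intro ψ
  obtain ⟨Ψ, rfl⟩ := MonoidHom.domRestrict_surjective ℂ Γ ψ
  obtain ⟨x, hx⟩ := hq.exists_qSigma_eq hnd (Ψ.comp (inl A A))
  obtain ⟨y, hy⟩ := hq.exists_qSigma_eq hnd (Ψ.comp (inr A A))
  refine ⟨((hq.sigmaHom.flip y).domRestrict B, x * y⁻¹), MonoidHom.ext fun z => ?_⟩
  obtain ⟨⟨u, v⟩, hz⟩ := z
  show qSigma q u (x * y⁻¹) * qSigma q (u * v) y = Ψ (u, v)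
  calc qSigma q u (x * y⁻¹) * qSigma q (u * v) y = qSigma q u x * qSigma q v y := by
        rw [hq.2.2, hq.2.1, hq.qSigma_inv_right]
        group
    _ = Ψ (u, 1) * Ψ (1, v) := by rw [hx, hy]; rfl
    _ = Ψ (u, v) := by rw [← map_mul, Prod.mk_mul_mk, mul_one, one_mul]

lemma gammaCharHom_dualProdHom (hq : IsQuadratic q) (hβ : IsSchellekens q B β)
    (hΓB : ∀ z ∈ Γ, z.1 * z.2 ∈ B) (hΓ : (Γ : Set (A × A)) ⊆ GammaSet q B β) (b : B) :
    gammaCharHom hq hΓB (hβ.dualProdHom b) = 1 := by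
  refine MonoidHom.ext fun z => ?_
  show qSigma q (z : A × A).1 b * (β (gammaMul hΓB z) b)⁻¹ = 1
  rw [mul_inv_eq_one, qSigma_comm, qSigma_eq_of_mem_gammaSet (hΓ z.2) b, hβ.1]
  rfl

lemma exists_dualProdHom_eq_of_gammaCharHom_eq_one [Finite A] (hq : IsQuadratic q)
    (hnd : IsNondeg q) (hβ : IsSchellekens q B β) (hΓB : ∀ z ∈ Γ, z.1 * z.2 ∈ B)
    (hΓ : GammaSet q B β ⊆ Γ) {χ : B →* ℂˣ} {a : A} (h : gammaCharHom hq hΓB (χ, a) = 1) :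
    ∃ b, hβ.dualProdHom b = (χ, a) := by
  have h_gamma (u : A) (b : B) (hu : ∀ c : B, qSigma q c u = β c b) :
      qSigma q u a * χ b = 1 := by
    let z : Γ := ⟨(u, u⁻¹ * b), hΓ (mk_mem_gammaSet hu)⟩
    have hb : gammaMul hΓB z = b := Subtype.ext (mul_inv_cancel_left u (b : A))
    calc qSigma q u a * χ b = gammaCharHom hq hΓB (χ, a) z := by rw [gammaCharHom_apply, hb]
      _ = 1 := by rw [h]; rfl
  have haB : a ∈ B := hq.mem_of_forall_qSigma_eq_one hnd fun u hu => by
    have h1 := h_gamma u 1 fun c => (hu c c.2).trans (map_one (hβ.betaHom c)).symm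
    rwa [map_one, mul_one] at h1
  refine ⟨⟨a, haB⟩, Prod.ext ?_ rfl⟩
  refine MonoidHom.ext fun c => ?_
  obtain ⟨u, hu⟩ := hq.exists_qSigma_eq_on_subgroup hnd (hβ.betaHom.flip c)
  have hχ := h_gamma u c hu
  rw [qSigma_comm, hu ⟨a, haB⟩] at hχ
  show (β c ⟨a, haB⟩)⁻¹ = χ c
  rw [hβ.1]
  exact inv_eq_of_mul_eq_one_right hχ

end Gamma

end

/-- the short exact sequence `B → B̂ × A → Γ̂`, where the first map is
`b ↦ (β(−,b)⁻¹, b)` and the second sends `(χ, a)` to the character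
`(u,v) ↦ σ(u,a)·χ(uv)` of `Γ = Γ(B,β)`. -/
theorem gamma_dual_ses {A : Type*} [CommGroup A] [Fintype A]
    (q : A → ℂˣ) (hq : IsQuadratic q) (hnd : IsNondeg q)
    (B : Subgroup A) (β : B → B → ℂˣ) (hβ : IsSchellekens q B β)
    (Γ : Subgroup (A × A)) (hΓ : (Γ : Set (A × A)) = GammaSet q B β) :
    ∃ (j : B →* (B →* ℂˣ) × A) (π : ((B →* ℂˣ) × A) →* (Γ →* ℂˣ)),
      (∀ b c : B, (j b).1 c = (β c b)⁻¹) ∧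
      (∀ b : B, (j b).2 = (b : A)) ∧
      (∀ (χ : B →* ℂˣ) (a : A) (z : Γ) (h : (z : A × A).1 * (z : A × A).2 ∈ B),
        π (χ, a) z = qSigma q (z : A × A).1 a * χ ⟨(z : A × A).1 * (z : A × A).2, h⟩) ∧
      Function.Injective j ∧ Function.Surjective π ∧ j.range = MonoidHom.ker (G := (B →* ℂˣ) × A) π := by
  have hΓB : ∀ z ∈ Γ, z.1 * z.2 ∈ B := fun z hz =>
    mul_mem_of_mem_gammaSet (hΓ ▸ hz : z ∈ GammaSet q B β)
  refine ⟨hβ.dualProdHom, gammaCharHom hq hΓB, fun _ _ => rfl, fun _ => rfl, fun _ _ _ _ => rfl,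
    hβ.dualProdHom_injective, gammaCharHom_surjective hq hnd hΓB, le_antisymm ?_ ?_⟩
  · rintro _ ⟨b, rfl⟩
    exact gammaCharHom_dualProdHom hq hβ hΓB hΓ.le b
  · rintro ⟨χ, a⟩ h
    exact exists_dualProdHom_eq_of_gammaCharHom_eq_one hq hnd hβ hΓB hΓ.ge h
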